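/- For every δ ∈ (0,1] there exists a constant C = C(δ) > 0 such that for all t ≥ 1, every nonzero integer k, and all ξ, η ∈ ℝ: ⟨t⟩²(⟨t⟩ + |(k,ξ)|)·⟨t − ξ/k⟩² / ((⟨t⟩ + |ξ/k|)·⟨ξ/k⟩²) ≤ C · ⟨t⟩²(⟨t⟩ + |(k,η)|)·⟨t − η/k⟩² / ((⟨t⟩ + |η/k|)·⟨η/k⟩²) · exp( δ · ( min(⟨ξ−η⟩, ⟨k,η⟩) )^{1/2} ). -/

import Mathlib

/-!
Write `x = ξ / k`, `y = η / k`. Since `√(k² + ξ²) = |k| ⟨x⟩`, both sides are values of one weight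
in the variable `x`, resp. `y`. By Peetre's inequality `⟨a⟩² ≤ 2 ⟨b⟩² ⟨a - b⟩²` every factor of the
weight changes by at most a factor `2 ⟨x - y⟩²`, and `⟨x - y⟩ ≤ ⟨ξ - η⟩`. On the other hand the
weight at `x` is at most `4 |k| ⟨t⟩⁴` and the weight at `y` is at least `⟨t⟩⁴ / (4 ⟨y⟩⁵)`, and
`|k|, ⟨y⟩ ≤ ⟨k, η⟩`. Either way the ratio is at most `16 m⁶` with `m` the minimum in the exponent,
and a polynomial in `√m` is dominated by `exp (δ √m)`.
-/

noncomputable def jb (a : ℝ) : ℝ := Real.sqrt (1 + a ^ 2)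
noncomputable def jb2 (k : ℤ) (η : ℝ) : ℝ := Real.sqrt (1 + (k : ℝ) ^ 2 + η ^ 2)

open scoped Nat

lemma pow_le_mul_exp {δ x : ℝ} (hδ : 0 < δ) (hx : 0 ≤ x) (n : ℕ) :
    x ^ n ≤ n ! / δ ^ n * Real.exp (δ * x) := by
  have h := Real.pow_div_factorial_le_exp (x := δ * x) (by positivity) n
  rw [mul_pow, div_le_iff₀ (by positivity)] at h
  rw [div_mul_eq_mul_div, le_div_iff₀ (by positivity)]
  linarith

lemma jb_sq (a : ℝ) : jb a ^ 2 = 1 + a ^ 2 := Real.sq_sqrt (by positivity)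

lemma one_le_jb (a : ℝ) : 1 ≤ jb a := Real.one_le_sqrt.mpr (by nlinarith)

lemma jb_pos (a : ℝ) : 0 < jb a := one_pos.trans_le (one_le_jb a)

lemma abs_le_jb (a : ℝ) : |a| ≤ jb a := Real.abs_le_sqrt (by linarith)

lemma jb_le_one_add_abs (a : ℝ) : jb a ≤ 1 + |a| :=
  Real.sqrt_le_iff.mpr ⟨by positivity, by nlinarith [abs_nonneg a, sq_abs a]⟩

lemma jb_le_jb {a b : ℝ} (h : |a| ≤ |b|) : jb a ≤ jb b :=
  Real.sqrt_le_sqrt (by nlinarith [sq_abs a, sq_abs b, abs_nonneg a])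

lemma jb_neg (a : ℝ) : jb (-a) = jb a := by
  rw [jb, jb, neg_sq]

/-- Peetre's inequality. -/
lemma jb_sq_le (a b : ℝ) : jb a ^ 2 ≤ 2 * jb b ^ 2 * jb (a - b) ^ 2 := by
  rw [jb_sq, jb_sq, jb_sq]
  nlinarith [sq_nonneg (b * (a - b)), sq_nonneg (a - 2 * b)]

lemma jb_le (a b : ℝ) : jb a ≤ 2 * jb b * jb (a - b) := by
  refine le_of_sq_le_sq ?_ (by have := jb_pos b; have := jb_pos (a - b); positivity)
  nlinarith [jb_sq_le a b, sq_nonneg (jb b * jb (a - b))]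

lemma sqrt_sq_add_sq {k : ℝ} (hk : k ≠ 0) (ξ : ℝ) : √(k ^ 2 + ξ ^ 2) = |k| * jb (ξ / k) := by
  rw [jb, ← Real.sqrt_sq_eq_abs, ← Real.sqrt_mul (sq_nonneg k)]
  congr 1
  field_simp

/-- The expression of the theorem at frequency `ξ = K x`, with `K = |k|`. -/
noncomputable def weight (t K x : ℝ) : ℝ :=
  jb t ^ 2 * (jb t + K * jb x) * jb (t - x) ^ 2 / ((jb t + |x|) * jb x ^ 2)

section Weight

variable {t K : ℝ}

lemma weight_nonneg (hK : 0 ≤ K) (x : ℝ) : 0 ≤ weight t K x := by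
  have := jb_pos x; have := jb_pos t
  unfold weight; positivity

lemma weight_le_jb_sub (hK : 0 ≤ K) (x y : ℝ) :
    weight t K x ≤ 16 * jb (x - y) ^ 6 * weight t K y := by
  set W := jb (x - y)
  have hW := one_le_jb (x - y)
  have hT := one_le_jb t
  have hy := jb_pos y
  have hx := jb_pos x
  have h1 : jb t + K * jb x ≤ 2 * W * (jb t + K * jb y) := by
    nlinarith [mul_le_mul_of_nonneg_left (jb_le x y) hK]
  have h2 : jb (t - x) ^ 2 ≤ 2 * W ^ 2 * jb (t - y) ^ 2 := by
    have := jb_sq_le (t - x) (t - y)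
    rwa [show t - x - (t - y) = -(x - y) by ring, jb_neg, mul_right_comm] at this
  have h3 : jb t + |y| ≤ 2 * W * (jb t + |x|) := by
    have := abs_le_jb (x - y)
    nlinarith [abs_sub_abs_le_abs_sub y x, abs_sub_comm x y, abs_nonneg x]
  have h4 : jb y ^ 2 ≤ 2 * W ^ 2 * jb x ^ 2 := by
    have := jb_sq_le y x
    rwa [← neg_sub, jb_neg, mul_right_comm] at this
  unfold weight
  rw [mul_div_assoc', div_le_div_iff₀ (by positivity) (by positivity)]
  calc jb t ^ 2 * (jb t + K * jb x) * jb (t - x) ^ 2 * ((jb t + |y|) * jb y ^ 2)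
      ≤ jb t ^ 2 * (2 * W * (jb t + K * jb y)) * (2 * W ^ 2 * jb (t - y) ^ 2) *
          ((2 * W * (jb t + |x|)) * (2 * W ^ 2 * jb x ^ 2)) := by
        gcongr
    _ = 16 * W ^ 6 * (jb t ^ 2 * (jb t + K * jb y) * jb (t - y) ^ 2) *
          ((jb t + |x|) * jb x ^ 2) := by ring

lemma weight_le_mul_jb_pow_four (hK : 1 ≤ K) (x : ℝ) : weight t K x ≤ 4 * K * jb t ^ 4 := by
  have hT := one_le_jb t
  have hx := jb_pos x
  have h1 : jb t + K * jb x ≤ 2 * K * (jb t + |x|) := by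
    nlinarith [jb_le_one_add_abs x, abs_nonneg x]
  have h2 : jb (t - x) ^ 2 ≤ 2 * jb t ^ 2 * jb x ^ 2 := by
    simpa [mul_right_comm, jb_neg] using jb_sq_le (t - x) t
  unfold weight
  rw [div_le_iff₀ (by positivity)]
  calc jb t ^ 2 * (jb t + K * jb x) * jb (t - x) ^ 2
      ≤ jb t ^ 2 * (2 * K * (jb t + |x|)) * (2 * jb t ^ 2 * jb x ^ 2) := by gcongr
    _ = 4 * K * jb t ^ 4 * ((jb t + |x|) * jb x ^ 2) := by ring

lemma jb_pow_four_le_weight (hK : 0 ≤ K) (y : ℝ) :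
    jb t ^ 4 ≤ 4 * jb y ^ 5 * weight t K y := by
  have hT := one_le_jb t
  have hy := one_le_jb y
  have h1 : jb t ^ 2 ≤ 2 * jb (t - y) ^ 2 * jb y ^ 2 := by
    simpa [mul_right_comm] using jb_sq_le t (t - y)
  have h2 : jb t + |y| ≤ 2 * jb t * jb y := by nlinarith [abs_le_jb y]
  unfold weight
  rw [mul_div_assoc', le_div_iff₀ (by positivity)]
  calc jb t ^ 4 * ((jb t + |y|) * jb y ^ 2)
      ≤ jb t ^ 2 * (2 * jb (t - y) ^ 2 * jb y ^ 2) * ((2 * jb t * jb y) * jb y ^ 2) := by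
        rw [show jb t ^ 4 = jb t ^ 2 * jb t ^ 2 by ring]
        gcongr
    _ = 4 * jb y ^ 5 * (jb t ^ 2 * jb t * jb (t - y) ^ 2) := by ring
    _ ≤ 4 * jb y ^ 5 * (jb t ^ 2 * (jb t + K * jb y) * jb (t - y) ^ 2) := by
        gcongr
        nlinarith [jb_pos y]

lemma weight_le_mul_pow (hK : 1 ≤ K) (x y : ℝ) :
    weight t K x ≤ 16 * K * jb y ^ 5 * weight t K y := by
  calc weight t K x ≤ 4 * K * jb t ^ 4 := weight_le_mul_jb_pow_four hK x
    _ ≤ 4 * K * (4 * jb y ^ 5 * weight t K y) := by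
        gcongr; exact jb_pow_four_le_weight (by linarith) y
    _ = 16 * K * jb y ^ 5 * weight t K y := by ring

end Weight

lemma weight_le_min_pow {k : ℤ} (hk : k ≠ 0) (t ξ η : ℝ) :
    weight t |(k : ℝ)| (ξ / k) ≤
      16 * min (jb (ξ - η)) (jb2 k η) ^ 6 * weight t |(k : ℝ)| (η / k) := by
  have hk1 : (1 : ℝ) ≤ |(k : ℝ)| := by exact_mod_cast Int.one_le_abs hk
  have hweight := weight_nonneg (t := t) (abs_nonneg (k : ℝ)) (η / k)
  have abs_div_le (a : ℝ) : |a / k| ≤ |a| := by rw [abs_div]; exact div_le_self (abs_nonneg a) hk1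
  rcases min_cases (jb (ξ - η)) (jb2 k η) with ⟨hmin, -⟩ | ⟨hmin, -⟩ <;> rw [hmin]
  · have hW : jb (ξ / k - η / k) ≤ jb (ξ - η) := jb_le_jb (by rw [← sub_div]; exact abs_div_le _)
    calc _ ≤ 16 * jb (ξ / k - η / k) ^ 6 * weight t |(k : ℝ)| (η / k) :=
          weight_le_jb_sub (abs_nonneg _) _ _
      _ ≤ _ := by have := one_le_jb (ξ / k - η / k); gcongr
  · have hK : |(k : ℝ)| ≤ jb2 k η := Real.abs_le_sqrt (by nlinarith)
    have hy : jb (η / k) ≤ jb2 k η :=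
      (jb_le_jb ((abs_div_le η).trans_eq (abs_abs η).symm)).trans
        (Real.sqrt_le_sqrt (by nlinarith [sq_abs η]))
    calc _ ≤ 16 * |(k : ℝ)| * jb (η / k) ^ 5 * weight t |(k : ℝ)| (η / k) :=
          weight_le_mul_pow hk1 _ _
      _ ≤ 16 * jb2 k η * jb2 k η ^ 5 * weight t |(k : ℝ)| (η / k) := by
          have := jb_pos (η / k); have := hk1.trans hK; gcongr
      _ = _ := by ring

theorem stmt14 (δ : ℝ) (hδ : δ ∈ Set.Ioc (0 : ℝ) 1) :
    ∃ C : ℝ, 0 < C ∧ ∀ (t : ℝ), 1 ≤ t → ∀ (k : ℤ), k ≠ 0 → ∀ ξ η : ℝ,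
    (jb t) ^ 2 * (jb t + Real.sqrt ((k : ℝ) ^ 2 + ξ ^ 2)) * (jb (t - ξ / (k : ℝ))) ^ 2 /
        ((jb t + |ξ / (k : ℝ)|) * (jb (ξ / (k : ℝ))) ^ 2) ≤
      C * ((jb t) ^ 2 * (jb t + Real.sqrt ((k : ℝ) ^ 2 + η ^ 2)) *
              (jb (t - η / (k : ℝ))) ^ 2 /
            ((jb t + |η / (k : ℝ)|) * (jb (η / (k : ℝ))) ^ 2)) *
        Real.exp (δ * Real.sqrt (min (jb (ξ - η)) (jb2 k η))) := by
  obtain ⟨hδ, -⟩ := hδ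
  refine ⟨16 * (12 ! / δ ^ 12), by positivity, fun t _ k hk ξ η => ?_⟩
  have hk' : (k : ℝ) ≠ 0 := Int.cast_ne_zero.mpr hk
  rw [sqrt_sq_add_sq hk', sqrt_sq_add_sq hk']
  set m := min (jb (ξ - η)) (jb2 k η)
  have hm : m ^ 6 = √m ^ 12 := by
    have : 0 ≤ m := le_min (jb_pos _).le (Real.sqrt_nonneg _)
    rw [show 12 = 2 * 6 by rfl, pow_mul, Real.sq_sqrt this]
  calc weight t |(k : ℝ)| (ξ / k) ≤ 16 * m ^ 6 * weight t |(k : ℝ)| (η / k) :=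
        weight_le_min_pow hk t ξ η
    _ ≤ 16 * (12 ! / δ ^ 12 * Real.exp (δ * √m)) * weight t |(k : ℝ)| (η / k) := by
        have := weight_nonneg (t := t) (abs_nonneg (k : ℝ)) (η / k)
        rw [hm]
        gcongr
        exact pow_le_mul_exp hδ (Real.sqrt_nonneg m) 12
    _ = _ := by unfold weight; ring
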